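/- (Theorem 2) Let n be an even positive integer, let m < n/2, and let α_1,…,α_m ≥ 0. Let V be the n×n real circulant symmetric matrix with first column given by v_0 = 1 + 2(α_1 + ⋯ + α_m), v_j = v_{n−j} = −α_j for 1 ≤ j ≤ m, and v_j = 0 for m < j < n − m. Then V is positive definite and |Tr(F_n · log₂ V)| = log₂(1 + 4(α_1 + α_3 + α_5 + ⋯)), where the sum runs over the coupling coefficients with odd index. -/

import Mathlib

open Matrix

/-- The `m × m` flip matrix `F_m`: with 0-based indices, entry `(i,j)` is `1`
iff `i + j = m - 1`. -/
noncomputable def flipMat (m : ℕ) : Matrix (Fin m) (Fin m) ℝ :=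
  Matrix.of fun i j => if (i : ℕ) + (j : ℕ) = m - 1 then 1 else 0

/-- Matrix base-2 logarithm `log₂ M = (log M)/ln 2` defined via the continuous
functional calculus (spectral calculus). -/
noncomputable def mlogb2 {k : ℕ} (M : Matrix (Fin k) (Fin k) ℝ) :
    Matrix (Fin k) (Fin k) ℝ :=
  cfc (fun x : ℝ => Real.logb 2 x) M

/-!
`V` is a symmetric circulant matrix with nonpositive off-diagonal entries and row sums `1`, so it
is positive definite by Gershgorin's theorem. Every additive character `ψ` of `ℤ/n` is an
eigenvector of a circulant matrix `circ x`, with eigenvalue `∑ₗ x l ψ(-l)`; since `log₂ V`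
commutes with all circulant matrices it is itself circulant, and its eigenvalue at `ψ` is `log₂`
of that of `V`. For a circulant `X = circ x` and even `n`, `Tr(F_n X) = ∑ᵢ x(2i+1) = 2 ∑_{l odd} x l`
is the difference of the eigenvalues of `X` at the trivial and at the alternating character
`l ↦ (-1)^l`. For `V` these eigenvalues are `1` and `1 + 4(α₁ + α₃ + ⋯)`, hence
`Tr(F_n log₂ V) = -log₂(1 + 4(α₁ + α₃ + ⋯))`.
-/

open Finset

section Spectral

variable {ι : Type*} [Fintype ι] [DecidableEq ι]

theorem Matrix.IsHermitian.cfc_mulVec_of_mulVec_eq_smul {A : Matrix ι ι ℝ} (hA : A.IsHermitian)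
    (f : ℝ → ℝ) {u : ι → ℝ} {μ : ℝ} (hu : A *ᵥ u = μ • u) : cfc f A *ᵥ u = f μ • u := by
  have hA' : IsSelfAdjoint A := hA
  have hcont (g : ℝ → ℝ) : ContinuousOn g (spectrum ℝ A) := A.finite_spectrum.continuousOn g
  -- `f - f μ` factors through `x - μ`, which kills `u`.
  set g : ℝ → ℝ := fun x => (f x - f μ) / (x - μ)
  have hf : f = fun x => g x * (x - μ) + f μ := by
    ext x
    rcases eq_or_ne x μ with rfl | hx
    · simp
    · simp [g, div_mul_cancel₀ _ (sub_ne_zero.mpr hx)]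
  have hcfc : cfc f A = cfc g A * (A - algebraMap ℝ _ μ) + algebraMap ℝ _ (f μ) := by
    conv_lhs => rw [hf]
    rw [cfc_add _ _ _ (hcont _) (hcont _), cfc_mul _ _ _ (hcont _) (hcont _),
      cfc_sub _ _ _ (hcont _) (hcont _), cfc_id' ℝ A, cfc_const μ A, cfc_const (f μ) A]
  have hker : (A - algebraMap ℝ _ μ) *ᵥ u = 0 := by
    rw [sub_mulVec, hu, Algebra.algebraMap_eq_smul_one, smul_mulVec, one_mulVec, sub_self]
  rw [hcfc, add_mulVec, ← mulVec_mulVec, hker, mulVec_zero, zero_add,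
    Algebra.algebraMap_eq_smul_one, smul_mulVec, one_mulVec]

theorem Matrix.IsHermitian.posDef_of_sum_abs_lt_diag {A : Matrix ι ι ℝ} (hA : A.IsHermitian)
    (h : ∀ k, ∑ j ∈ univ.erase k, |A k j| < A k k) : A.PosDef := by
  refine hA.posDef_iff_eigenvalues_pos.mpr fun i => ?_
  have hμ : Module.End.HasEigenvalue (toLin' A) (hA.eigenvalues i) := by
    rw [Module.End.hasEigenvalue_iff_mem_spectrum, spectrum_toLin']
    exact hA.eigenvalues_mem_spectrum_real i
  obtain ⟨k, hk⟩ := eigenvalue_mem_ball hμ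
  rw [Metric.mem_closedBall, Real.dist_eq] at hk
  simp only [Real.norm_eq_abs] at hk
  linarith [h k, neg_abs_le (hA.eigenvalues i - A k k)]

end Spectral

namespace Matrix

section Circulant

variable {G : Type*} [AddCommGroup G] [Fintype G]

def circulantEigenvalue {R : Type*} [CommSemiring R] (v : G → R) (ψ : AddChar G R) : R :=
  ∑ l, v l * ψ (-l)

@[simp]
theorem circulantEigenvalue_one {R : Type*} [CommSemiring R] (v : G → R) :
    circulantEigenvalue v 1 = ∑ l, v l := by
  simp [circulantEigenvalue]

theorem circulant_mulVec_addChar {R : Type*} [CommSemiring R] (v : G → R) (ψ : AddChar G R) :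
    circulant v *ᵥ ψ = circulantEigenvalue v ψ • ψ := by
  ext i
  simp only [mulVec, dotProduct, circulant_apply, circulantEigenvalue, Pi.smul_apply,
    smul_eq_mul, sum_mul]
  refine Fintype.sum_equiv (Equiv.subLeft i) _ _ fun j => ?_
  rw [Equiv.subLeft_apply, mul_assoc, ← AddChar.map_add_eq_mul, neg_sub, sub_add_cancel]

variable [DecidableEq G]

theorem eq_circulant_of_forall_commute {R : Type*} [Semiring R] {X : Matrix G G R}
    (h : ∀ s, Commute X (circulant (Pi.single s 1))) : X = circulant fun i => X i 0 := by
  ext i j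
  have hij : ∀ k, i - k = j ↔ k = i - j := fun k => by
    rw [sub_eq_iff_eq_add, eq_sub_iff_add_eq', eq_comm]
  simpa [mul_apply, circulant_apply, Pi.single_apply, hij] using congrFun (congrFun (h j) i) 0

theorem exists_cfc_circulant_eq_circulant (v : G → ℝ) (f : ℝ → ℝ) :
    ∃ x, cfc f (circulant v) = circulant x :=
  ⟨_, eq_circulant_of_forall_commute fun _ =>
    (show Commute (circulant v) _ from circulant_mul_comm _ _).cfc_real f⟩

theorem circulantEigenvalue_of_cfc_eq_circulant {v x : G → ℝ} (hv : (circulant v).IsHermitian)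
    {f : ℝ → ℝ} (hx : cfc f (circulant v) = circulant x) (ψ : AddChar G ℝ) :
    circulantEigenvalue x ψ = f (circulantEigenvalue v ψ) := by
  have h := hv.cfc_mulVec_of_mulVec_eq_smul f (circulant_mulVec_addChar v ψ)
  rw [hx, circulant_mulVec_addChar] at h
  simpa using congrFun h 0

theorem posDef_circulant_of_nonpos {v : G → ℝ} (hsymm : ∀ l, v (-l) = v l)
    (hoff : ∀ l ≠ 0, v l ≤ 0) (hsum : 0 < ∑ l, v l) : (circulant v).PosDef := by
  have hherm : (circulant v).IsHermitian := by
    rw [isHermitian_iff_isSymm, circulant_isSymm_iff]; exact hsymm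
  refine hherm.posDef_of_sum_abs_lt_diag fun k => ?_
  have hrow : ∑ j, v (k - j) = ∑ l, v l := Fintype.sum_equiv (Equiv.subLeft k) _ _ fun _ => rfl
  have habs : ∀ j ∈ univ.erase k, |circulant v k j| = -v (k - j) := fun j hj =>
    abs_of_nonpos (hoff _ (sub_ne_zero.mpr (ne_of_mem_erase hj).symm))
  rw [sum_congr rfl habs, sum_neg_distrib, sum_erase_eq_sub (mem_univ k), hrow]
  simp only [circulant_apply, sub_self]
  linarith

end Circulant

end Matrix

theorem neg_one_pow_mod_of_even {R : Type*} [Ring R] {n : ℕ} (hn : Even n) (t : ℕ) :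
    (-1 : R) ^ (t % n) = (-1) ^ t := by
  rw [neg_one_pow_eq_pow_mod_two, Nat.mod_mod_of_dvd _ hn.two_dvd, ← neg_one_pow_eq_pow_mod_two]

theorem neg_one_pow_sub_of_even {R : Type*} [Ring R] {n j : ℕ} (hn : Even n) (hj : j ≤ n) :
    (-1 : R) ^ (n - j) = (-1) ^ j := by
  rw [neg_one_pow_eq_pow_mod_two, neg_one_pow_eq_pow_mod_two (n := j)]
  obtain ⟨k, rfl⟩ := hn
  congr 1; omega

namespace Fin

def altChar (n : ℕ) [NeZero n] (hn : Even n) : AddChar (Fin n) ℝ where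
  toFun i := (-1) ^ (i : ℕ)
  map_zero_eq_one' := by simp
  map_add_eq_mul' i j := by rw [Fin.val_add, neg_one_pow_mod_of_even hn, pow_add]

variable {n : ℕ} [NeZero n] (hn : Even n)

theorem altChar_apply (i : Fin n) : altChar n hn i = (-1) ^ (i : ℕ) := rfl

theorem altChar_neg (i : Fin n) : altChar n hn (-i) = altChar n hn i := by
  rw [AddChar.map_neg_eq_inv, altChar_apply, ← inv_pow, inv_neg_one]

end Fin

theorem Finset.sum_range_two_mul {M : Type*} [AddCommMonoid M] (f : ℕ → M) (k : ℕ) :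
    ∑ t ∈ range (2 * k), f t = ∑ i ∈ range k, (f (2 * i) + f (2 * i + 1)) := by
  induction k with
  | zero => simp
  | succ k ih => rw [Nat.mul_succ, sum_range_succ, sum_range_succ, sum_range_succ, ih, add_assoc]

theorem Finset.sum_range_two_mul_add_one_of_periodic {R : Type*} [Ring R] {n : ℕ} (hn : Even n)
    (y : ℕ → R) (hy : ∀ t, y (t + n) = y t) :
    ∑ i ∈ range n, y (2 * i + 1) = ∑ t ∈ range n, (1 - (-1) ^ t) * y t := by
  obtain ⟨k, rfl⟩ := hn
  have hper : ∀ i, y (2 * (k + i) + 1) = y (2 * i + 1) := fun i => by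
    rw [show 2 * (k + i) + 1 = 2 * i + 1 + (k + k) by ring, hy]
  have hodd : ∀ i, (1 - (-1 : R) ^ (2 * i + 1)) * y (2 * i + 1) = 2 * y (2 * i + 1) := fun i => by
    rw [(odd_two_mul_add_one i).neg_one_pow]; noncomm_ring
  rw [sum_range_add, ← two_mul, sum_range_two_mul]
  simp only [hper, (even_two_mul _).neg_one_pow, sub_self, zero_mul, zero_add, hodd, ← mul_sum]
  noncomm_ring

theorem Finset.sum_range_eq_add_sum_Icc_of_band {M : Type*} [AddCommMonoid M] {n m : ℕ}
    (h : 2 * m < n) (g : ℕ → M) (hg : ∀ i, m < i → i < n - m → g i = 0) :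
    ∑ i ∈ range n, g i = g 0 + ∑ j ∈ Icc 1 m, (g j + g (n - j)) := by
  have hreflect : ∑ j ∈ Icc 1 m, g (n - j) = ∑ i ∈ Ico (n - m) n, g i := by
    rw [← Ico_add_one_right_eq_Icc, sum_Ico_reflect _ _ (by omega),
      show n + 1 - (m + 1) = n - m by omega, Nat.add_sub_cancel]
  rw [sum_add_distrib, hreflect, range_eq_Ico,
    ← sum_Ico_consecutive g (Nat.zero_le (n - m)) (Nat.sub_le n m),
    ← sum_Ico_consecutive g (Nat.zero_le (m + 1)) (by omega : m + 1 ≤ n - m),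
    ← sum_Ico_consecutive g (Nat.zero_le 1) (by omega : 1 ≤ m + 1),
    sum_eq_zero (s := Ico (m + 1) (n - m)) fun i hi => hg i (by simp at hi; omega)
      (by simp at hi; omega),
    Ico_add_one_right_eq_Icc]
  simp [add_assoc]

theorem trace_flipMat_mul {n : ℕ} (M : Matrix (Fin n) (Fin n) ℝ) :
    (flipMat n * M).trace = ∑ i, M i.rev i := by
  refine sum_congr rfl fun i _ => ?_
  have hflip : ∀ j : Fin n, flipMat n i j = if j = i.rev then 1 else 0 := fun j => by
    simp only [flipMat, of_apply, Fin.ext_iff, Fin.val_rev]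
    congr 1; apply propext; omega
  simp [diag_apply, mul_apply, hflip]

theorem trace_flipMat_mul_circulant {n : ℕ} [NeZero n] (hn : Even n) (x : Fin n → ℝ) :
    (flipMat n * circulant x).trace
      = circulantEigenvalue x 1 - circulantEigenvalue x (Fin.altChar n hn) := by
  set y : ℕ → ℝ := fun t => x ⟨t % n, Nat.mod_lt _ (NeZero.pos n)⟩
  have hdiff : ∀ i : Fin n, i.rev - i = ⟨(2 * i.rev + 1) % n, Nat.mod_lt _ (NeZero.pos n)⟩ :=
    fun i => by ext; simp only [Fin.sub_def, Fin.val_rev]; congr 1; omega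
  have hy : ∀ l : Fin n, y l = x l := fun l => by simp only [y, Nat.mod_eq_of_lt l.isLt]
  calc (flipMat n * circulant x).trace = ∑ i : Fin n, x (i.rev - i) := trace_flipMat_mul _
    _ = ∑ i : Fin n, y (2 * i + 1) :=
        Fintype.sum_equiv Fin.revPerm _ _ fun i => by simp [y, hdiff]
    _ = ∑ t ∈ range n, (1 - (-1) ^ t) * y t := by
        rw [Fin.sum_univ_eq_sum_range (fun i => y (2 * i + 1)),
          sum_range_two_mul_add_one_of_periodic hn y fun t => by simp only [y, Nat.add_mod_right]]
    _ = circulantEigenvalue x 1 - circulantEigenvalue x (Fin.altChar n hn) := by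
        rw [← Fin.sum_univ_eq_sum_range (fun t => (1 - (-1) ^ t) * y t), circulantEigenvalue_one,
          circulantEigenvalue, ← sum_sub_distrib]
        refine sum_congr rfl fun l _ => ?_
        rw [hy, Fin.altChar_neg, Fin.altChar_apply]; ring

def couplingCoeff (n m : ℕ) (a : ℕ → ℝ) (i : ℕ) : ℝ :=
  if i = 0 then 1 + 2 * ∑ j ∈ Icc 1 m, a j
  else if i ≤ m then -a i
  else if n - i ≤ m then -a (n - i)
  else 0

section CouplingCoeff

variable {n m : ℕ} {a : ℕ → ℝ}

theorem couplingCoeff_zero : couplingCoeff n m a 0 = 1 + 2 * ∑ j ∈ Icc 1 m, a j := rfl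

theorem couplingCoeff_of_mem_Icc {j : ℕ} (hj : j ∈ Icc 1 m) : couplingCoeff n m a j = -a j := by
  rw [mem_Icc] at hj
  simp [couplingCoeff, show j ≠ 0 by omega, hj.2]

theorem couplingCoeff_sub (h : 2 * m < n) {i : ℕ} (hi0 : i ≠ 0) (hin : i < n) :
    couplingCoeff n m a (n - i) = couplingCoeff n m a i := by
  unfold couplingCoeff
  split_ifs <;> first | omega | (congr 2; omega) | rfl

theorem couplingCoeff_nonpos (ha : ∀ j, 0 ≤ a j) {i : ℕ} (hi : i ≠ 0) :
    couplingCoeff n m a i ≤ 0 := by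
  unfold couplingCoeff
  split_ifs <;> simp_all

theorem sum_range_couplingCoeff_mul (h : 2 * m < n) (w : ℕ → ℝ) :
    ∑ i ∈ range n, couplingCoeff n m a i * w i
      = (1 + 2 * ∑ j ∈ Icc 1 m, a j) * w 0 - ∑ j ∈ Icc 1 m, a j * (w j + w (n - j)) := by
  rw [sum_range_eq_add_sum_Icc_of_band h _ fun i hmi hin => by
    simp [couplingCoeff, show i ≠ 0 by omega, show ¬ i ≤ m by omega, show ¬ n - i ≤ m by omega]]
  rw [couplingCoeff_zero, sub_eq_add_neg, ← sum_neg_distrib]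
  congr 1
  refine sum_congr rfl fun j hj => ?_
  have hj' := mem_Icc.mp hj
  rw [couplingCoeff_sub h (by omega) (by omega), couplingCoeff_of_mem_Icc hj]
  ring

theorem couplingCoeff_fin_neg (h : 2 * m < n) [NeZero n] (l : Fin n) :
    couplingCoeff n m a (-l : Fin n) = couplingCoeff n m a l := by
  rw [Fin.val_neg]
  split_ifs with hl
  · rw [hl, Fin.val_zero]
  · exact couplingCoeff_sub h (Fin.val_ne_zero_iff.mpr hl) l.isLt

theorem circulantEigenvalue_couplingCoeff_one (h : 2 * m < n) [NeZero n] :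
    circulantEigenvalue (fun l : Fin n => couplingCoeff n m a l) 1 = 1 := by
  have := sum_range_couplingCoeff_mul (a := a) h fun _ => 1
  simp only [mul_one] at this
  rw [circulantEigenvalue_one, Fin.sum_univ_eq_sum_range (couplingCoeff n m a), this, mul_sum,
    add_sub_assoc, ← sum_sub_distrib, sum_eq_zero fun j _ => by ring, add_zero]

theorem circulantEigenvalue_couplingCoeff_altChar (h : 2 * m < n) [NeZero n] (hn : Even n) :
    circulantEigenvalue (fun l : Fin n => couplingCoeff n m a l) (Fin.altChar n hn)
      = 1 + 4 * ∑ j ∈ Icc 1 m with Odd j, a j := by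
  simp only [circulantEigenvalue, Fin.altChar_neg]
  simp only [Fin.altChar_apply]
  rw [Fin.sum_univ_eq_sum_range (fun i => couplingCoeff n m a i * (-1) ^ i),
    sum_range_couplingCoeff_mul h, sum_filter, mul_sum, mul_sum, pow_zero, mul_one,
    add_sub_assoc, ← sum_sub_distrib]
  congr 1
  refine sum_congr rfl fun j hj => ?_
  rw [neg_one_pow_sub_of_even hn (by simp at hj; omega)]
  rcases Nat.even_or_odd j with hj | hj
  · simp [hj.neg_one_pow, Nat.not_odd_iff_even.mpr hj]; ring
  · simp [hj.neg_one_pow, hj]; ring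

end CouplingCoeff

/-- **Theorem 2.** For `n` even positive, `m < n/2`, coupling
coefficients `α₁, …, α_m ≥ 0`, and `V` the circulant symmetric matrix with
first column `v₀ = 1 + 2(α₁ + ⋯ + α_m)`, `v_j = v_{n-j} = -α_j` for
`1 ≤ j ≤ m`, and `v_j = 0` otherwise, `V` is positive definite and
`|Tr(F_n log₂ V)| = log₂(1 + 4(α₁ + α₃ + α₅ + ⋯))` (sum over odd indices). -/
theorem abs_trace_flip_logb_eq_logb_odd_couplings
    (n : ℕ) (hn : Even n) (hn0 : 0 < n)
    (m : ℕ) (hm : m < n / 2)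
    (a : ℕ → ℝ) (ha : ∀ j, 0 ≤ a j)
    (v : Fin n → ℝ)
    (hv : ∀ l : Fin n, v l =
      if (l : ℕ) = 0 then 1 + 2 * ∑ j ∈ Finset.Icc 1 m, a j
      else if (l : ℕ) ≤ m then -a (l : ℕ)
      else if n - (l : ℕ) ≤ m then -a (n - (l : ℕ))
      else 0)
    (V : Matrix (Fin n) (Fin n) ℝ) (hV : V = Matrix.circulant v) :
    V.PosDef
      ∧ |(flipMat n * mlogb2 V).trace|
          = Real.logb 2 (1 + 4 * ∑ j ∈ (Finset.Icc 1 m).filter (fun j => Odd j), a j) := by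
  subst hV
  have : NeZero n := ⟨hn0.ne'⟩
  have h2m : 2 * m < n := by omega
  obtain rfl : v = fun l : Fin n => couplingCoeff n m a l := funext hv
  have hev_one := circulantEigenvalue_couplingCoeff_one (a := a) h2m
  have hpos : (circulant fun l : Fin n => couplingCoeff n m a l).PosDef :=
    posDef_circulant_of_nonpos (couplingCoeff_fin_neg h2m)
      (fun l hl => couplingCoeff_nonpos ha (Fin.val_ne_zero_iff.mpr hl))
      (by rw [← circulantEigenvalue_one, hev_one]; exact one_pos)
  refine ⟨hpos, ?_⟩
  obtain ⟨x, hx⟩ := exists_cfc_circulant_eq_circulant (fun l : Fin n => couplingCoeff n m a l)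
    (Real.logb 2)
  have hodd : 0 ≤ ∑ j ∈ Icc 1 m with Odd j, a j := sum_nonneg fun j _ => ha j
  have hlogb_nonneg : 0 ≤ Real.logb 2 (1 + 4 * ∑ j ∈ Icc 1 m with Odd j, a j) :=
    Real.logb_nonneg one_lt_two (by linarith)
  rw [mlogb2, hx, trace_flipMat_mul_circulant hn,
    circulantEigenvalue_of_cfc_eq_circulant hpos.isHermitian hx,
    circulantEigenvalue_of_cfc_eq_circulant hpos.isHermitian hx, hev_one,
    circulantEigenvalue_couplingCoeff_altChar h2m hn, Real.logb_one, zero_sub, abs_neg,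
    abs_of_nonneg hlogb_nonneg]
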